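/- arXiv:2603.10415 — 3 statements merged into one kernel-verified Lean document; each statement's English description precedes it below -/
import Mathlib

section
/- Let N ≥ 2 be a natural number, λ > 0 and n̄ > 0 real numbers, Ω_N = 4λ√n̄/√N, and ε(t) = (1 − cos(Ω_N t))/2. Fix ε ∈ (0,1]. Then every t ≥ 0 with ε(t) ≥ ε satisfies t ≥ √(N·ε)/(2λ√n̄); consequently the first-passage time τ*(ε) = inf{t ≥ 0 : ε(t) ≥ ε} satisfies τ*(ε) ≥ √(N·ε)/(2λ√n̄). -/
/-- **Dicke battery quantum speed limit** (main result).
Along the classical-field ergotropy trajectory `ε(t) = (1 - cos(Ω_N t))/2`,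
every time `t ≥ 0` at which the normalized ergotropy reaches the level
`e ∈ (0,1]` satisfies `t ≥ √(N e)/(2 lam √nbar)`; consequently the
first-passage time `τ*(e) = inf {t ≥ 0 : ε(t) ≥ e}` obeys the same bound. -/
theorem dicke_battery_QSL
    (N : ℕ) (hN : 2 ≤ N) (lam nbar : ℝ) (hlam : 0 < lam) (hnbar : 0 < nbar)
    (Ω : ℝ) (hΩ : Ω = 4 * lam * Real.sqrt nbar / Real.sqrt N)
    (ε : ℝ → ℝ) (hε : ∀ t, ε t = (1 - Real.cos (Ω * t)) / 2)
    (e : ℝ) (he : e ∈ Set.Ioc (0 : ℝ) 1) :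
    (∀ t : ℝ, 0 ≤ t → ε t ≥ e →
        t ≥ Real.sqrt (N * e) / (2 * lam * Real.sqrt nbar)) ∧
    sInf {t : ℝ | 0 ≤ t ∧ ε t ≥ e} ≥
        Real.sqrt (N * e) / (2 * lam * Real.sqrt nbar) := by
  have hNpos : (0:ℝ) < N := by positivity
  have hsN : 0 < Real.sqrt N := Real.sqrt_pos.mpr hNpos
  have hsn : 0 < Real.sqrt nbar := Real.sqrt_pos.mpr hnbar
  have hΩpos : 0 < Ω := by rw [hΩ]; positivity
  have key : Real.sqrt (N * e) / (2 * lam * Real.sqrt nbar)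
      = 2 * Real.sqrt e / Ω := by
    rw [hΩ, Real.sqrt_mul (le_of_lt hNpos)]
    field_simp
    ring
  have hbound : ∀ t : ℝ, 0 ≤ t → ε t ≥ e →
      t ≥ Real.sqrt (N * e) / (2 * lam * Real.sqrt nbar) := by
    intro t ht hεt
    rw [key]
    rw [hε t] at hεt
    -- 2e ≤ 1 - cos(Ωt) ≤ (Ωt)^2/2
    have h1 : 1 - (Ω * t) ^ 2 / 2 ≤ Real.cos (Ω * t) :=
      Real.one_sub_sq_div_two_le_cos
    have h2 : 2 * e ≤ (Ω * t) ^ 2 / 2 * 2 / 2 := by nlinarith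
    have h3 : 4 * e ≤ (Ω * t) ^ 2 := by nlinarith
    have h4 : Real.sqrt (4 * e) ≤ Ω * t := by
      calc Real.sqrt (4 * e) ≤ Real.sqrt ((Ω * t) ^ 2) := Real.sqrt_le_sqrt h3
        _ = Ω * t := Real.sqrt_sq (by positivity)
    have h5 : Real.sqrt (4 * e) = 2 * Real.sqrt e := by
      rw [show (4:ℝ) * e = 2^2 * e by ring, Real.sqrt_mul (by positivity),
        Real.sqrt_sq (by norm_num)]
    rw [ge_iff_le, div_le_iff₀ hΩpos]
    linarith [h4, h5.symm.le]
  refine ⟨hbound, ?_⟩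
  apply le_csInf
  · refine ⟨Real.pi / Ω, by positivity, ?_⟩
    rw [hε, mul_div_cancel₀ _ (ne_of_gt hΩpos), Real.cos_pi]
    have := he.2
    norm_num
    linarith
  · rintro t ⟨ht, hεt⟩
    exact hbound t ht hεt
end

section
/- The limit as ε → 0⁺ of arccos(1 − 2ε)/(2√ε) equals 1. Equivalently, for Ω_N = 4λ√n̄/√N with λ, n̄ > 0 and N ≥ 2, the ratio τ*(ε)/τ_QSL(ε) of the first-passage time τ*(ε) = arccos(1 − 2ε)/Ω_N to the quantum-speed-limit time τ_QSL(ε) = √(N·ε)/(2λ√n̄) tends to 1 as ε → 0⁺. -/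
open Filter Topology

lemma arcsin_div_tendsto :
    Tendsto (fun x : ℝ => Real.arcsin x / x) (𝓝[≠] 0) (𝓝 1) := by
  have h : HasDerivAt Real.arcsin 1 0 := by
    have := Real.hasDerivAt_arcsin (x := 0) (by norm_num) (by norm_num)
    simpa using this
  have := hasDerivAt_iff_tendsto_slope.1 h
  refine this.congr' ?_
  filter_upwards [self_mem_nhdsWithin] with x hx
  simp [slope, Real.arcsin_zero, sub_zero, div_eq_inv_mul]

lemma arccos_div_tendsto :
    Tendsto (fun e : ℝ => Real.arccos (1 - 2 * e) / (2 * Real.sqrt e))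
      (𝓝[>] 0) (𝓝 1) := by
  have hsqrt : Tendsto (fun e : ℝ => Real.sqrt e) (𝓝[>] 0) (𝓝[≠] 0) := by
    apply tendsto_nhdsWithin_of_tendsto_nhds_of_eventually_within
    · have := (Real.continuous_sqrt.tendsto 0)
      simpa using this.mono_left nhdsWithin_le_nhds
    · filter_upwards [self_mem_nhdsWithin] with e (he : 0 < e)
      exact ne_of_gt (Real.sqrt_pos.2 he)
  have hcomp := arcsin_div_tendsto.comp hsqrt
  refine hcomp.congr' ?_
  filter_upwards [self_mem_nhdsWithin, Ioo_mem_nhdsGT (by norm_num : (0:ℝ) < 1)]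
    with e (he : 0 < e) he1
  have he1' : e ≤ 1 := le_of_lt he1.2
  have hs0 : 0 ≤ Real.sqrt e := Real.sqrt_nonneg e
  have hs1 : Real.sqrt e ≤ 1 := by
    rw [show (1:ℝ) = Real.sqrt 1 by simp]
    exact Real.sqrt_le_sqrt he1'
  have hsin : Real.sin (Real.arcsin (Real.sqrt e)) = Real.sqrt e :=
    Real.sin_arcsin (by linarith) hs1
  have hkey : Real.arccos (1 - 2 * e) = 2 * Real.arcsin (Real.sqrt e) := by
    have hcos : Real.cos (2 * Real.arcsin (Real.sqrt e)) = 1 - 2 * e := by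
      rw [Real.cos_two_mul]
      have hsq : Real.cos (Real.arcsin (Real.sqrt e)) ^ 2
          = 1 - Real.sin (Real.arcsin (Real.sqrt e)) ^ 2 := by
        have := Real.sin_sq_add_cos_sq (Real.arcsin (Real.sqrt e)); linarith
      rw [hsq, hsin, Real.sq_sqrt he.le]; ring
    have h0 : 0 ≤ 2 * Real.arcsin (Real.sqrt e) := by
      have := Real.arcsin_nonneg.2 hs0; linarith
    have hpi : 2 * Real.arcsin (Real.sqrt e) ≤ Real.pi := by
      have := Real.arcsin_le_pi_div_two (Real.sqrt e); linarith
    rw [← hcos, Real.arccos_cos h0 hpi]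
  simp only [Function.comp, hkey]
  rw [mul_comm (2:ℝ) (Real.sqrt e), mul_div_mul_comm]
  simp

/-- **Tightness of the Dicke QSL at small ergotropy.**
`arccos(1 - 2ε)/(2√ε) → 1` as `ε → 0⁺`; equivalently, the ratio
`τ*(ε)/τ_QSL(ε)` of the first-passage time `τ*(ε) = arccos(1 - 2ε)/Ω_N`
to the quantum-speed-limit time `τ_QSL(ε) = √(N ε)/(2 lam √nbar)` tends
to `1` as `ε → 0⁺`. -/
theorem dicke_QSL_tightness
    (N : ℕ) (hN : 2 ≤ N) (lam nbar : ℝ) (hlam : 0 < lam) (hnbar : 0 < nbar)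
    (Ω : ℝ) (hΩ : Ω = 4 * lam * Real.sqrt nbar / Real.sqrt N)
    (τstar τQSL : ℝ → ℝ)
    (hτstar : ∀ e, τstar e = Real.arccos (1 - 2 * e) / Ω)
    (hτQSL : ∀ e, τQSL e = Real.sqrt (N * e) / (2 * lam * Real.sqrt nbar)) :
    Tendsto (fun e : ℝ => Real.arccos (1 - 2 * e) / (2 * Real.sqrt e))
      (𝓝[>] 0) (𝓝 1) ∧
    Tendsto (fun e : ℝ => τstar e / τQSL e) (𝓝[>] 0) (𝓝 1) := by
  refine ⟨arccos_div_tendsto, ?_⟩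
  refine arccos_div_tendsto.congr' ?_
  filter_upwards [self_mem_nhdsWithin] with e (he : 0 < e)
  have hNpos : (0:ℝ) < N := by positivity
  have hsN : 0 < Real.sqrt N := Real.sqrt_pos.2 hNpos
  have hsn : 0 < Real.sqrt nbar := Real.sqrt_pos.2 hnbar
  have hse : 0 < Real.sqrt e := Real.sqrt_pos.2 he
  have hmul : Real.sqrt (N * e) = Real.sqrt N * Real.sqrt e :=
    Real.sqrt_mul hNpos.le e
  rw [hτstar, hτQSL, hΩ, hmul]
  field_simp
  ring
end

section
/- Let N ≥ 2 be a natural number, λ > 0, n̄ > 0, τ > 0, and ε ∈ (0,1], and set Ω_N = 4λ√n̄/√N. If (1 − cos(Ω_N·τ))/2 ≥ ε, then λ ≥ √(N·ε)/(2·τ·√n̄). -/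
/-- **Circuit-QED design rule** (contrapositive QSL): if the classical-field
ergotropy `(1 - cos(Ω_N τ))/2` reaches level `e ∈ (0,1]` at time `τ > 0`,
then the coupling must satisfy `lam ≥ √(N e)/(2 τ √nbar)`. -/
theorem dicke_design_rule
    (N : ℕ) (hN : 2 ≤ N) (lam nbar τ : ℝ)
    (hlam : 0 < lam) (hnbar : 0 < nbar) (hτ : 0 < τ)
    (e : ℝ) (he : e ∈ Set.Ioc (0 : ℝ) 1)
    (Ω : ℝ) (hΩ : Ω = 4 * lam * Real.sqrt nbar / Real.sqrt N)
    (hreach : (1 - Real.cos (Ω * τ)) / 2 ≥ e) :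
    lam ≥ Real.sqrt (N * e) / (2 * τ * Real.sqrt nbar) := by
  obtain ⟨he0, he1⟩ := he
  have hN2 : (2:ℝ) ≤ (N:ℝ) := by exact_mod_cast hN
  have hNpos : (0:ℝ) < N := by linarith
  have hsNpos : 0 < Real.sqrt N := Real.sqrt_pos.2 hNpos
  have hsnpos : 0 < Real.sqrt nbar := Real.sqrt_pos.2 hnbar
  have hΩpos : 0 < Ω := by rw [hΩ]; positivity
  have hxpos : 0 < Ω * τ := mul_pos hΩpos hτ
  have hcos := Real.one_sub_sq_div_two_le_cos (x := Ω * τ)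
  have hx2 : 4 * e ≤ (Ω * τ) ^ 2 := by nlinarith
  have hse : Real.sqrt e ^ 2 = e := Real.sq_sqrt he0.le
  have hsenn : 0 ≤ Real.sqrt e := Real.sqrt_nonneg e
  have hx : 2 * Real.sqrt e ≤ Ω * τ := by nlinarith
  have hNe : Real.sqrt ((N:ℝ) * e) = Real.sqrt N * Real.sqrt e :=
    Real.sqrt_mul hNpos.le e
  rw [ge_iff_le, div_le_iff₀ (by positivity)]
  have hxsN : Ω * Real.sqrt N = 4 * lam * Real.sqrt nbar := by
    rw [hΩ]; field_simp
  nlinarith [mul_le_mul_of_nonneg_right hx hsNpos.le]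
end
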